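/- arXiv:1905.11766 — 8 statements merged into one kernel-verified Lean document; each statement's English description precedes it below -/
import Mathlib

section
/- The function t ↦ 1/(1 - cos t) is strictly convex on the open interval (0, π). -/
open Real Set

theorem strictConvexOn_one_div_one_sub_cos :
    StrictConvexOn ℝ (Ioo 0 π) (fun t : ℝ => 1 / (1 - Real.cos t)) := by
  set f : ℝ → ℝ := fun t => 1 / (1 - Real.cos t) with hf
  set f1 : ℝ → ℝ := fun t => -Real.sin t / (1 - Real.cos t) ^ 2 with hf1
  have hlt : ∀ x ∈ Ioo (0:ℝ) π, Real.cos x < 1 := by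
    intro x hx
    have := Real.cos_lt_cos_of_nonneg_of_le_pi (le_refl 0) (le_of_lt hx.2) hx.1
    simpa using this
  have hopen : IsOpen {t : ℝ | Real.cos t < 1} :=
    isOpen_lt Real.continuous_cos continuous_const
  have hne : ∀ t : ℝ, Real.cos t < 1 → (1 - Real.cos t) ≠ 0 := by
    intro t ht; intro h; nlinarith
  have hd1 : ∀ t : ℝ, Real.cos t < 1 → HasDerivAt f (f1 t) t := by
    intro t ht
    have hsub : HasDerivAt (fun t : ℝ => 1 - Real.cos t) (Real.sin t) t := by
      simpa [Pi.sub_def] using (hasDerivAt_const t (1:ℝ)).sub (Real.hasDerivAt_cos t)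
    have := hsub.inv (hne t ht)
    simpa [hf, hf1, one_div, neg_div, Pi.inv_def] using this
  have hd2 : ∀ t : ℝ, Real.cos t < 1 →
      HasDerivAt f1 ((2 + Real.cos t) / (1 - Real.cos t) ^ 2) t := by
    intro t ht
    have h0 := hne t ht
    have hnum : HasDerivAt (fun t : ℝ => -Real.sin t) (-Real.cos t) t :=
      (Real.hasDerivAt_sin t).neg
    have hden : HasDerivAt (fun t : ℝ => (1 - Real.cos t) ^ 2)
        (2 * (1 - Real.cos t) * Real.sin t) t := by
      have hsub : HasDerivAt (fun t : ℝ => 1 - Real.cos t) (Real.sin t) t := by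
        simpa [Pi.sub_def] using (hasDerivAt_const t (1:ℝ)).sub (Real.hasDerivAt_cos t)
      have := hsub.pow 2
      simpa [mul_comm, mul_assoc, mul_left_comm, Pi.pow_def] using this
    have h02 : (1 - Real.cos t) ^ 2 ≠ 0 := pow_ne_zero 2 h0
    have hdiv : HasDerivAt f1 _ t := hnum.div hden h02
    convert hdiv using 1
    have hsc : Real.sin t ^ 2 = 1 - Real.cos t ^ 2 := by
      nlinarith [Real.sin_sq_add_cos_sq t]
    field_simp
    nlinarith [Real.sin_sq_add_cos_sq t]
  apply strictConvexOn_of_deriv2_pos (convex_Ioo 0 π)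
  · apply ContinuousOn.div continuousOn_const
    · exact (continuous_const.sub Real.continuous_cos).continuousOn
    · intro x hx; exact hne x (hlt x hx)
  · intro x hx
    rw [interior_Ioo] at hx
    have hx1 : Real.cos x < 1 := hlt x hx
    have heq : deriv f =ᶠ[nhds x] f1 :=
      Filter.eventuallyEq_of_mem (hopen.mem_nhds hx1) (fun t ht => (hd1 t ht).deriv)
    have h2 : deriv (deriv f) x = (2 + Real.cos x) / (1 - Real.cos x) ^ 2 := by
      rw [heq.deriv_eq, (hd2 x hx1).deriv]
    have : deriv^[2] f x = deriv (deriv f) x := by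
      simp [Function.iterate_succ, Function.iterate_one]
    rw [this, h2]
    apply div_pos
    · nlinarith [Real.neg_one_le_cos x]
    · have : (0:ℝ) < 1 - Real.cos x := by linarith
      positivity
end

section
/- The function t ↦ t / sin t is strictly convex on the open interval (0, π). -/
open Real Set

lemma hasDerivAt_f (x : ℝ) (hs : Real.sin x ≠ 0) :
    HasDerivAt (fun t : ℝ => t / Real.sin t)
      ((Real.sin x - x * Real.cos x) / Real.sin x ^ 2) x := by
  have h := (hasDerivAt_id x).div (Real.hasDerivAt_sin x) hs
  refine h.congr_deriv (Eq.symm ?_)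
  simp [id]

lemma hasDerivAt_g (x : ℝ) (hs : Real.sin x ≠ 0) :
    HasDerivAt (fun t : ℝ => (Real.sin t - t * Real.cos t) / Real.sin t ^ 2)
      ((x * (1 + Real.cos x ^ 2) - 2 * Real.sin x * Real.cos x) / Real.sin x ^ 3) x := by
  have hnum : HasDerivAt (fun t : ℝ => Real.sin t - t * Real.cos t)
      (x * Real.sin x) x := by
    have h := (Real.hasDerivAt_sin x).sub
      ((hasDerivAt_id x).mul (Real.hasDerivAt_cos x))
    refine h.congr_deriv (Eq.symm ?_)
    simp [id]
  have hden : HasDerivAt (fun t : ℝ => Real.sin t ^ 2)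
      (2 * Real.sin x * Real.cos x) x := by
    have h := (Real.hasDerivAt_sin x).pow 2
    refine h.congr_deriv (Eq.symm ?_)
    ring
  have hd : Real.sin x ^ 2 ≠ 0 := pow_ne_zero _ hs
  have h := hnum.div hden hd
  refine h.congr_deriv (Eq.symm ?_)
  rw [div_eq_div_iff (pow_ne_zero _ hs) (pow_ne_zero _ hd)]
  linear_combination (-(x * Real.sin x ^ 4)) * Real.sin_sq_add_cos_sq x

theorem strictConvexOn_div_sin :
    StrictConvexOn ℝ (Ioo 0 π) (fun t : ℝ => t / Real.sin t) := by
  have hIoo : interior (Ioo (0:ℝ) π) = Ioo 0 π := interior_Ioo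
  apply strictConvexOn_of_deriv2_pos (convex_Ioo 0 π)
  · -- continuity
    apply ContinuousOn.div continuousOn_id Real.continuousOn_sin
    intro x hx
    exact ne_of_gt (Real.sin_pos_of_pos_of_lt_pi hx.1 hx.2)
  · intro x hx
    rw [hIoo] at hx
    have hsin : 0 < Real.sin x := Real.sin_pos_of_pos_of_lt_pi hx.1 hx.2
    have hs : Real.sin x ≠ 0 := ne_of_gt hsin
    -- deriv f = g on Ioo 0 π
    have hderiv : ∀ y ∈ Ioo (0:ℝ) π,
        deriv (fun t : ℝ => t / Real.sin t) y
          = (Real.sin y - y * Real.cos y) / Real.sin y ^ 2 := fun y hy =>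
      (hasDerivAt_f y (ne_of_gt (Real.sin_pos_of_pos_of_lt_pi hy.1 hy.2))).deriv
    have heq : deriv (fun t : ℝ => t / Real.sin t)
        =ᶠ[nhds x] (fun t : ℝ => (Real.sin t - t * Real.cos t) / Real.sin t ^ 2) := by
      filter_upwards [isOpen_Ioo.mem_nhds hx] with y hy using hderiv y hy
    have h2 : deriv (deriv (fun t : ℝ => t / Real.sin t)) x
        = (x * (1 + Real.cos x ^ 2) - 2 * Real.sin x * Real.cos x) / Real.sin x ^ 3 := by
      rw [heq.deriv_eq]
      exact (hasDerivAt_g x hs).deriv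
    have h3 : deriv^[2] (fun t : ℝ => t / Real.sin t) x
        = deriv (deriv (fun t : ℝ => t / Real.sin t)) x := rfl
    rw [h3, h2]
    apply div_pos _ (pow_pos hsin 3)
    -- x (1 + cos² x) - 2 sin x cos x > 0
    rcases le_or_gt (Real.cos x) 0 with hc | hc
    · nlinarith [hx.1, sq_nonneg (Real.cos x), mul_nonneg hsin.le (neg_nonneg.2 hc)]
    · have hxs : Real.sin x < x := Real.sin_lt hx.1
      nlinarith [sq_nonneg (1 - Real.cos x), Real.sin_pos_of_pos_of_lt_pi hx.1 hx.2]
end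

section
/- For all s ∈ (0, 2π), s > 4 sin s / (3 + cos s). -/
open Real Set

lemma aux_three_sin_gt (x : ℝ) (hx0 : 0 < x) (hxπ : x < π) :
    2 * x * Real.cos x < 3 * Real.sin x := by
  have hsin : 0 < Real.sin x := Real.sin_pos_of_pos_of_lt_pi hx0 hxπ
  rcases le_or_gt (Real.cos x) 0 with hc | hc
  · nlinarith
  · have hx2 : x < π / 2 := by
      by_contra h
      push_neg at h
      have := Real.cos_nonpos_of_pi_div_two_le_of_le h (by linarith [Real.pi_pos])
      linarith
    have ht := Real.lt_tan hx0 hx2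
    rw [Real.tan_eq_sin_div_cos, lt_div_iff₀ hc] at ht
    nlinarith

lemma aux_deriv_pos (s : ℝ) (hs : s ∈ Ioo 0 (2 * π)) :
    0 < 3 - 3 * Real.cos s - s * Real.sin s := by
  obtain ⟨h0, h2⟩ := hs
  have hx0 : 0 < s / 2 := by linarith
  have hxπ : s / 2 < π := by linarith
  have hs2 : 2 * (s / 2) = s := by ring
  have h1 : Real.cos s = 1 - 2 * Real.sin (s / 2) ^ 2 := by
    have := Real.cos_two_mul (s / 2)
    have := Real.sin_sq_add_cos_sq (s / 2)
    rw [hs2] at *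
    nlinarith
  have h2' : Real.sin s = 2 * Real.sin (s / 2) * Real.cos (s / 2) := by
    have := Real.sin_two_mul (s / 2)
    rwa [hs2] at this
  have hsin : 0 < Real.sin (s / 2) := Real.sin_pos_of_pos_of_lt_pi hx0 hxπ
  have key := aux_three_sin_gt (s / 2) hx0 hxπ
  rw [h1, h2']
  nlinarith

theorem gt_four_sin_div_three_add_cos (s : ℝ) (hs : s ∈ Ioo 0 (2 * π)) :
    s > 4 * Real.sin s / (3 + Real.cos s) := by
  have hden : 0 < 3 + Real.cos s := by nlinarith [Real.neg_one_le_cos s]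
  rw [gt_iff_lt, div_lt_iff₀ hden]
  -- show 4 sin s < s * (3 + cos s)
  set f : ℝ → ℝ := fun t => t * (3 + Real.cos t) - 4 * Real.sin t with hf
  have hderiv : ∀ t : ℝ, HasDerivAt f (3 - 3 * Real.cos t - t * Real.sin t) t := by
    intro t
    have h1 : HasDerivAt (fun t : ℝ => t * (3 + Real.cos t))
        (1 * (3 + Real.cos t) + t * (-Real.sin t)) t :=
      (hasDerivAt_id t).mul ((Real.hasDerivAt_cos t).const_add 3)
    have h2 : HasDerivAt (fun t : ℝ => 4 * Real.sin t) (4 * Real.cos t) t :=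
      (Real.hasDerivAt_sin t).const_mul 4
    have := h1.sub h2
    exact this.congr_deriv (by ring)
  have hmono : StrictMonoOn f (Icc 0 (2 * π)) := by
    apply strictMonoOn_of_deriv_pos (convex_Icc 0 (2 * π))
    · exact (Continuous.sub (continuous_id.mul (by continuity)) (by continuity)).continuousOn
    · intro t ht
      rw [interior_Icc] at ht
      rw [(hderiv t).deriv]
      exact aux_deriv_pos t ht
  have h0 : f 0 < f s := by
    apply hmono (by constructor <;> [rfl; positivity]) ⟨le_of_lt hs.1, le_of_lt hs.2⟩ hs.1
  simp only [hf, zero_mul, Real.sin_zero, Real.cos_zero, mul_zero, sub_zero, zero_sub] at h0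
  linarith
end

section
/- Let k ≥ 2 and 2k+1 ≤ n ≤ 4k be integers, ϑ = 2kπ/n, and let ρ_1, ..., ρ_n > 0 with cyclic indexing. Then [∑_{i=1}^n ρ_i ρ_{i+1} (sin ϑ)/2] · [∑_{i=1}^n ((1/ρ_i² + 1/ρ_{i+1}²)·F(ϑ)/4 + (2/(ρ_i ρ_{i+1}))·G(ϑ)/4)] ≥ n² sin²(kπ/n), where F(ϑ) = -cos²(ϑ/2)cot(ϑ/2) + sin²(ϑ/2)tan(ϑ/2) and G(ϑ) = cos²(ϑ/2)cot(ϑ/2) + sin²(ϑ/2)tan(ϑ/2) + sin ϑ. -/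
open Real Set Finset

theorem volume_product_lower_bound (k n : ℕ) [NeZero n] (hk : 2 ≤ k)
    (hn1 : 2 * k + 1 ≤ n) (hn2 : n ≤ 4 * k) (ρ : ZMod n → ℝ)
    (hpos : ∀ i, 0 < ρ i) :
    (∑ i, ρ i * ρ (i + 1) * Real.sin (2 * k * π / n) / 2) *
      (∑ i, ((1 / ρ i ^ 2 + 1 / ρ (i + 1) ^ 2) *
          (-Real.cos ((2 * k * π / n) / 2) ^ 2 *
              (Real.cos ((2 * k * π / n) / 2) / Real.sin ((2 * k * π / n) / 2)) +
            Real.sin ((2 * k * π / n) / 2) ^ 2 * Real.tan ((2 * k * π / n) / 2)) / 4 +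
        (2 / (ρ i * ρ (i + 1))) *
          (Real.cos ((2 * k * π / n) / 2) ^ 2 *
              (Real.cos ((2 * k * π / n) / 2) / Real.sin ((2 * k * π / n) / 2)) +
            Real.sin ((2 * k * π / n) / 2) ^ 2 * Real.tan ((2 * k * π / n) / 2) +
            Real.sin (2 * k * π / n)) / 4)) ≥
      (n : ℝ) ^ 2 * Real.sin (k * π / n) ^ 2 := by
  have hn0 : 0 < n := by omega
  have hnR : (0:ℝ) < n := by exact_mod_cast hn0
  have hϑ : 2 * (k:ℝ) * π / n = 2 * ((k:ℝ) * π / n) := by ring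
  rw [hϑ]
  set θ : ℝ := (k:ℝ) * π / n with hθdef
  have hhalf : 2 * θ / 2 = θ := by ring
  rw [hhalf, Real.sin_two_mul, Real.tan_eq_sin_div_cos]
  set s : ℝ := Real.sin θ with hs'
  set c : ℝ := Real.cos θ with hc'
  -- bounds on θ
  have hθpos : 0 < θ := by
    apply div_pos _ hnR
    have : (0:ℝ) < (k:ℝ) := by exact_mod_cast (by omega : 0 < k)
    positivity
  have hθlt : θ < π / 2 := by
    rw [hθdef, div_lt_div_iff₀ hnR (by norm_num : (0:ℝ) < 2)]
    have h2k : (2 * k : ℝ) < n := by exact_mod_cast (by omega : 2 * k < n)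
    nlinarith [pi_pos]
  have hθge : π / 4 ≤ θ := by
    rw [hθdef, div_le_div_iff₀ (by norm_num : (0:ℝ) < 4) hnR]
    have h4k : (n:ℝ) ≤ 4 * k := by exact_mod_cast hn2
    nlinarith [pi_pos]
  have hc : 0 < c := Real.cos_pos_of_mem_Ioo ⟨by linarith [pi_pos], hθlt⟩
  have hs : 0 < s := Real.sin_pos_of_pos_of_lt_pi hθpos (by linarith [pi_pos])
  have hcs : c ≤ s := by
    have h1 : Real.cos θ ≤ Real.cos (π / 2 - θ) := by
      apply Real.cos_le_cos_of_nonneg_of_le_pi (by linarith) (by linarith [pi_pos])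
      linarith
    rwa [Real.cos_pi_div_two_sub] at h1
  have hpy : s ^ 2 + c ^ 2 = 1 := Real.sin_sq_add_cos_sq θ
  -- F and G
  set F : ℝ := -c ^ 2 * (c / s) + s ^ 2 * (s / c) with hF'
  set G : ℝ := c ^ 2 * (c / s) + s ^ 2 * (s / c) + 2 * s * c with hG'
  have hFnn : 0 ≤ F := by
    rw [hF']
    have h1 : c ^ 2 * (c / s) ≤ s ^ 2 * (s / c) := by
      rw [mul_div_assoc', mul_div_assoc', div_le_div_iff₀ hs hc]
      nlinarith
    linarith
  have hFG : F + G = 2 * s / c := by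
    rw [hF', hG']
    field_simp
    linear_combination 2 * s ^ 2 * hpy
  -- pointwise bound for the second sum
  have hB : (s / c) * ∑ i : ZMod n, 1 / (ρ i * ρ (i + 1)) ≤
      ∑ i : ZMod n, ((1 / ρ i ^ 2 + 1 / ρ (i + 1) ^ 2) * F / 4 +
        2 / (ρ i * ρ (i + 1)) * G / 4) := by
    rw [Finset.mul_sum]
    apply Finset.sum_le_sum
    intro i _
    have hx := hpos i
    have hy := hpos (i + 1)
    set x := ρ i
    set y := ρ (i + 1)
    have h1 : 2 / (x * y) ≤ 1 / x ^ 2 + 1 / y ^ 2 := by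
      rw [div_add_div _ _ (by positivity) (by positivity), div_le_div_iff₀ (by positivity) (by positivity)]
      nlinarith [sq_nonneg (x - y), sq_nonneg (x*y), mul_pos hx hy]
    have h2 : 2 / (x * y) * F / 4 ≤ (1 / x ^ 2 + 1 / y ^ 2) * F / 4 := by
      apply div_le_div_of_nonneg_right _ (by norm_num)
      exact mul_le_mul_of_nonneg_right h1 hFnn
    have h3 : 2 / (x * y) * F / 4 + 2 / (x * y) * G / 4 = (F + G) / (x * y) / 2 := by
      ring
    have h4 : (F + G) / (x * y) / 2 = s / c * (1 / (x * y)) := by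
      rw [hFG]; field_simp
    linarith
  -- Cauchy-Schwarz
  have hcard : (Finset.univ : Finset (ZMod n)).card = n := by
    simp [ZMod.card]
  have hCS : (n : ℝ) ^ 2 ≤ (∑ i : ZMod n, ρ i * ρ (i + 1)) *
      ∑ i : ZMod n, 1 / (ρ i * ρ (i + 1)) := by
    have := Finset.sum_mul_sq_le_sq_mul_sq Finset.univ
      (fun i : ZMod n => Real.sqrt (ρ i * ρ (i + 1)))
      (fun i : ZMod n => 1 / Real.sqrt (ρ i * ρ (i + 1)))
    have e1 : ∀ i : ZMod n, Real.sqrt (ρ i * ρ (i + 1)) * (1 / Real.sqrt (ρ i * ρ (i + 1))) = 1 := by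
      intro i
      have h0 : Real.sqrt (ρ i * ρ (i + 1)) ≠ 0 :=
        ne_of_gt (Real.sqrt_pos.2 (mul_pos (hpos i) (hpos (i + 1))))
      rw [mul_one_div, div_self h0]
    have e2 : ∀ i : ZMod n, Real.sqrt (ρ i * ρ (i + 1)) ^ 2 = ρ i * ρ (i + 1) := fun i =>
      Real.sq_sqrt (le_of_lt (mul_pos (hpos i) (hpos (i + 1))))
    have e3 : ∀ i : ZMod n, (1 / Real.sqrt (ρ i * ρ (i + 1))) ^ 2 = 1 / (ρ i * ρ (i + 1)) := by
      intro i
      rw [div_pow, one_pow, e2 i]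
    simp only [e1, e2, e3, Finset.sum_const, hcard, nsmul_eq_mul, mul_one] at this
    exact_mod_cast this
  -- first sum
  have hA : (∑ i : ZMod n, ρ i * ρ (i + 1) * (2 * s * c) / 2) =
      s * c * ∑ i : ZMod n, ρ i * ρ (i + 1) := by
    rw [Finset.mul_sum]
    exact Finset.sum_congr rfl fun i _ => by ring
  set P := ∑ i : ZMod n, ρ i * ρ (i + 1) with hP'
  set Q := ∑ i : ZMod n, 1 / (ρ i * ρ (i + 1)) with hQ'
  have hPpos : 0 < P := Finset.sum_pos (fun i _ => mul_pos (hpos i) (hpos (i + 1)))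
    ⟨0, Finset.mem_univ 0⟩
  have hQpos : 0 < Q := Finset.sum_pos
    (fun i _ => by have := mul_pos (hpos i) (hpos (i + 1)); positivity)
    ⟨0, Finset.mem_univ 0⟩
  have key : s * c * P * ((s / c) * Q) = s ^ 2 * (P * Q) := by
    field_simp
  calc (∑ i : ZMod n, ρ i * ρ (i + 1) * (2 * s * c) / 2) *
      (∑ i : ZMod n, ((1 / ρ i ^ 2 + 1 / ρ (i + 1) ^ 2) * F / 4 +
        2 / (ρ i * ρ (i + 1)) * G / 4))
      ≥ (s * c * P) * ((s / c) * Q) := by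
        rw [hA]
        apply mul_le_mul_of_nonneg_left hB
        positivity
    _ = s ^ 2 * (P * Q) := key
    _ ≥ s ^ 2 * (n : ℝ) ^ 2 := by
        apply mul_le_mul_of_nonneg_left hCS (sq_nonneg s)
    _ = (n : ℝ) ^ 2 * s ^ 2 := by ring
end

section
/- In the setting of the previous inequality (2k+1 ≤ n ≤ 4k-1, ϑ = 2kπ/n), equality holds if and only if all ρ_i are equal. -/
open Real Set Finset


theorem vpb_helper (N : ℕ) [NeZero N] (ρ : ZMod N → ℝ) (hpos : ∀ i, 0 < ρ i)
    (s c : ℝ) (hs : 0 < s) (hc : 0 < c) (hcs : c < s) (hpy : s ^ 2 + c ^ 2 = 1) :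
    (∑ i, ρ i * ρ (i + 1) * (2 * s * c) / 2) *
      (∑ i, ((1 / ρ i ^ 2 + 1 / ρ (i + 1) ^ 2) *
          (-c ^ 2 * (c / s) + s ^ 2 * (s / c)) / 4 +
        (2 / (ρ i * ρ (i + 1))) *
          (c ^ 2 * (c / s) + s ^ 2 * (s / c) + 2 * s * c) / 4)) =
      (N : ℝ) ^ 2 * s ^ 2 ↔
    ∀ i j : ZMod N, ρ i = ρ j := by
  have hs' := hs.ne'
  have hc' := hc.ne'
  have ha : ∀ i : ZMod N, 0 < ρ i * ρ (i + 1) := fun i => mul_pos (hpos i) (hpos _)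
  set A : ℝ := -c ^ 2 * (c / s) + s ^ 2 * (s / c) with hAdef
  set B : ℝ := c ^ 2 * (c / s) + s ^ 2 * (s / c) + 2 * s * c with hBdef
  have hApos : 0 < A := by
    rw [hAdef, show -c ^ 2 * (c / s) + s ^ 2 * (s / c) = (s ^ 4 - c ^ 4) / (s * c) by
      field_simp; ring]
    apply div_pos (by nlinarith) (by positivity)
  have hAB : A + B = 2 * (s / c) := by
    rw [hAdef, hBdef]
    field_simp
    linear_combination 2 * s ^ 2 * hpy
  have hBval : B = 2 * (s / c) - A := by linarith
  -- rewrite the two sums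
  have hS1 : (∑ i, ρ i * ρ (i + 1) * (2 * s * c) / 2)
      = s * c * ∑ i, ρ i * ρ (i + 1) := by
    rw [Finset.mul_sum]
    exact Finset.sum_congr rfl fun i _ => by ring
  have hT : (∑ i, ((1 / ρ i ^ 2 + 1 / ρ (i + 1) ^ 2) * A / 4 +
        2 / (ρ i * ρ (i + 1)) * B / 4))
      = (s / c) * (∑ i, 1 / (ρ i * ρ (i + 1))) +
        ∑ i, (ρ i - ρ (i + 1)) ^ 2 * A / (4 * (ρ i * ρ (i + 1)) ^ 2) := by
    rw [Finset.mul_sum, ← Finset.sum_add_distrib]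
    refine Finset.sum_congr rfl fun i _ => ?_
    have hx := (hpos i).ne'
    have hy := (hpos (i + 1)).ne'
    rw [hBval]
    field_simp
    ring
  have hCauchy : (N : ℝ) ^ 2
      ≤ (∑ i, ρ i * ρ (i + 1)) * (∑ i, 1 / (ρ i * ρ (i + 1))) := by
    have h1 : ∀ i : ZMod N,
        Real.sqrt (ρ i * ρ (i + 1)) * (1 / Real.sqrt (ρ i * ρ (i + 1))) = 1 := by
      intro i
      field_simp [Real.sqrt_ne_zero'.2 (ha i)]
    have h2 : ∀ i : ZMod N, Real.sqrt (ρ i * ρ (i + 1)) ^ 2 = ρ i * ρ (i + 1) :=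
      fun i => Real.sq_sqrt (ha i).le
    have h3 : ∀ i : ZMod N,
        (1 / Real.sqrt (ρ i * ρ (i + 1))) ^ 2 = 1 / (ρ i * ρ (i + 1)) := by
      intro i; rw [div_pow, one_pow, h2]
    calc (N : ℝ) ^ 2
        = (∑ i : ZMod N, Real.sqrt (ρ i * ρ (i + 1)) * (1 / Real.sqrt (ρ i * ρ (i + 1)))) ^ 2 := by
          rw [Finset.sum_congr rfl fun i _ => h1 i]
          simp [Finset.card_univ, ZMod.card]
      _ ≤ (∑ i : ZMod N, Real.sqrt (ρ i * ρ (i + 1)) ^ 2) *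
          (∑ i : ZMod N, (1 / Real.sqrt (ρ i * ρ (i + 1))) ^ 2) :=
          Finset.sum_mul_sq_le_sq_mul_sq _ _ _
      _ = (∑ i, ρ i * ρ (i + 1)) * (∑ i, 1 / (ρ i * ρ (i + 1))) := by
          rw [Finset.sum_congr rfl fun i _ => h2 i, Finset.sum_congr rfl fun i _ => h3 i]
  rw [hS1, hT]
  set Sa := ∑ i, ρ i * ρ (i + 1) with hSadef
  set Sinv := ∑ i, 1 / (ρ i * ρ (i + 1)) with hSinvdef
  set Sd := ∑ i, (ρ i - ρ (i + 1)) ^ 2 * A / (4 * (ρ i * ρ (i + 1)) ^ 2) with hSddef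
  have hdnn : ∀ i : ZMod N, 0 ≤ (ρ i - ρ (i + 1)) ^ 2 * A / (4 * (ρ i * ρ (i + 1)) ^ 2) :=
    fun i => div_nonneg (mul_nonneg (sq_nonneg _) hApos.le) (by positivity)
  have hSdnn : 0 ≤ Sd := Finset.sum_nonneg fun i _ => hdnn i
  have hSapos : 0 < Sa := Finset.sum_pos (fun i _ => ha i) Finset.univ_nonempty
  constructor
  · intro heq
    have key : s ^ 2 * (Sa * Sinv) + s * c * Sa * Sd = (N : ℝ) ^ 2 * s ^ 2 := by
      rw [← heq]; field_simp
    have hge : (N : ℝ) ^ 2 * s ^ 2 ≤ s ^ 2 * (Sa * Sinv) := by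
      nlinarith [mul_le_mul_of_nonneg_left hCauchy (sq_nonneg s)]
    have hscSa : 0 < s * c * Sa := by positivity
    have hSd0 : Sd = 0 := le_antisymm (by nlinarith) hSdnn
    have hzero' := (Finset.sum_eq_zero_iff_of_nonneg (fun i _ => hdnn i)).1 hSd0
    have hstep : ∀ i : ZMod N, ρ i = ρ (i + 1) := by
      intro i
      have h0 := hzero' i (Finset.mem_univ i)
      rw [div_eq_zero_iff] at h0
      have h1 : (ρ i - ρ (i + 1)) ^ 2 * A = 0 :=
        h0.resolve_right (by exact (mul_pos four_pos (pow_pos (ha i) 2)).ne')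
      have h2 : (ρ i - ρ (i + 1)) ^ 2 = 0 :=
        (mul_eq_zero.1 h1).resolve_right hApos.ne'
      have h3 : ρ i - ρ (i + 1) = 0 := sq_eq_zero_iff.1 h2
      linarith
    have hnat : ∀ (m : ℕ) (i : ZMod N), ρ (i + (m : ZMod N)) = ρ i := by
      intro m
      induction m with
      | zero => simp
      | succ m ih =>
        intro i
        rw [Nat.cast_add, Nat.cast_one, ← add_assoc, ← hstep (i + (m : ZMod N))]
        exact ih i
    intro i j
    have h := hnat (j - i).val i
    rw [ZMod.natCast_val, ZMod.cast_id, add_sub_cancel] at h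
    exact h.symm
  · intro hall
    have hr := hpos 0
    have hallc : ∀ i : ZMod N, ρ i * ρ (i + 1) = ρ 0 * ρ 0 := fun i => by
      rw [hall i 0, hall (i + 1) 0]
    have hSa : Sa = (N : ℝ) * (ρ 0 * ρ 0) := by
      rw [hSadef, Finset.sum_congr rfl fun i _ => hallc i, Finset.sum_const,
        Finset.card_univ, ZMod.card, nsmul_eq_mul]
    have hSinv : Sinv = (N : ℝ) * (1 / (ρ 0 * ρ 0)) := by
      rw [hSinvdef, Finset.sum_congr rfl fun i _ => by rw [hallc i], Finset.sum_const,
        Finset.card_univ, ZMod.card, nsmul_eq_mul]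
    have hSd : Sd = 0 := by
      rw [hSddef]
      exact Finset.sum_eq_zero fun i _ => by simp [hall i (i + 1)]
    rw [hSa, hSinv, hSd]
    field_simp
    ring

theorem volume_product_lower_bound_equality (k n : ℕ) [NeZero n] (hk : 2 ≤ k)
    (hn1 : 2 * k + 1 ≤ n) (hn2 : n ≤ 4 * k - 1) (ρ : ZMod n → ℝ)
    (hpos : ∀ i, 0 < ρ i) :
    (∑ i, ρ i * ρ (i + 1) * Real.sin (2 * k * π / n) / 2) *
      (∑ i, ((1 / ρ i ^ 2 + 1 / ρ (i + 1) ^ 2) *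
          (-Real.cos ((2 * k * π / n) / 2) ^ 2 *
              (Real.cos ((2 * k * π / n) / 2) / Real.sin ((2 * k * π / n) / 2)) +
            Real.sin ((2 * k * π / n) / 2) ^ 2 * Real.tan ((2 * k * π / n) / 2)) / 4 +
        (2 / (ρ i * ρ (i + 1))) *
          (Real.cos ((2 * k * π / n) / 2) ^ 2 *
              (Real.cos ((2 * k * π / n) / 2) / Real.sin ((2 * k * π / n) / 2)) +
            Real.sin ((2 * k * π / n) / 2) ^ 2 * Real.tan ((2 * k * π / n) / 2) +
            Real.sin (2 * k * π / n)) / 4)) =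
      (n : ℝ) ^ 2 * Real.sin (k * π / n) ^ 2 ↔
    ∀ i j : ZMod n, ρ i = ρ j := by
  have hn : 0 < n := Nat.pos_of_ne_zero (NeZero.ne n)
  have hnR : (0 : ℝ) < n := by exact_mod_cast hn
  have hkR : (0 : ℝ) < k := by exact_mod_cast (by omega : 0 < k)
  have h2k : (2 * k : ℝ) < n := by exact_mod_cast (by omega : 2 * k < n)
  have h4k : (n : ℝ) < 4 * k := by exact_mod_cast (by omega : n < 4 * k)
  set θ : ℝ := (k : ℝ) * π / n with hθdef
  have hθ0 : 0 < θ := by rw [hθdef]; positivity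
  have hθ2 : θ < π / 2 := by
    rw [hθdef, div_lt_iff₀ hnR]; nlinarith [pi_pos]
  have hθ4 : π / 4 < θ := by
    rw [hθdef, lt_div_iff₀ hnR]; nlinarith [pi_pos]
  have hs : 0 < Real.sin θ := Real.sin_pos_of_pos_of_lt_pi hθ0 (by linarith [pi_pos])
  have hc : 0 < Real.cos θ := Real.cos_pos_of_mem_Ioo ⟨by linarith [pi_pos], hθ2⟩
  have hcs : Real.cos θ < Real.sin θ := by
    rw [← Real.sin_pi_div_two_sub]
    apply Real.strictMonoOn_sin ⟨by linarith, by linarith⟩ ⟨by linarith, by linarith⟩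
    linarith
  have hpy : Real.sin θ ^ 2 + Real.cos θ ^ 2 = 1 := Real.sin_sq_add_cos_sq θ
  have e1 : 2 * (k : ℝ) * π / n = 2 * θ := by rw [hθdef]; ring
  have e2 : 2 * θ / 2 = θ := by ring
  rw [e1, e2, Real.sin_two_mul, Real.tan_eq_sin_div_cos]
  exact vpb_helper n ρ hpos (Real.sin θ) (Real.cos θ) hs hc hcs hpy
end

section
/- For positive reals x_1, ..., x_m ∈ (c, π) (c ∈ (0,π)): ∑ sin x_i /2 · ∑ tan(x_i/2) ≥ m²·(1 − cos c)/2, where the estimate follows from sin x_i ≥ (π − x_i)·sin(π−c)/(π−c), tan(x_i/2) ≥ (2/(π − x_i))·((π−c)/2)/tan((π−c)/2), and the Cauchy–Schwarz (arithmetic–harmonic mean) inequality ∑ a_i · ∑ 1/a_i ≥ m². -/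
open Real Set Finset

theorem large_angles_bound (m : ℕ) (c : ℝ) (hc : c ∈ Ioo 0 π)
    (x : Fin m → ℝ) (hx : ∀ i, x i ∈ Ioo c π) :
    (∑ i, Real.sin (x i) / 2) * (∑ i, Real.tan (x i / 2)) ≥
      (m : ℝ) ^ 2 * (1 - Real.cos c) / 2 := by
  obtain ⟨hc0, hcπ⟩ := hc
  have hxi : ∀ i, 0 < x i ∧ x i < π := fun i => ⟨hc0.trans (hx i).1, (hx i).2⟩
  set r : Fin m → ℝ := fun i => Real.sqrt ((1 - Real.cos (x i)) / 2) with hr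
  have hf : ∀ i ∈ Finset.univ, (0:ℝ) ≤ Real.sin (x i) / 2 := fun i _ =>
    div_nonneg (Real.sin_nonneg_of_nonneg_of_le_pi (hxi i).1.le (hxi i).2.le) (by norm_num)
  have hg : ∀ i ∈ Finset.univ, (0:ℝ) ≤ Real.tan (x i / 2) := by
    intro i _
    have h1 : 0 < x i / 2 := by linarith [(hxi i).1]
    have h2 : x i / 2 < π / 2 := by linarith [(hxi i).2]
    exact (Real.tan_pos_of_pos_of_lt_pi_div_two h1 h2).le
  have ht : ∀ i ∈ Finset.univ, r i ^ 2 = Real.sin (x i) / 2 * Real.tan (x i / 2) := by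
    intro i _
    have hcos1 : Real.cos (x i) ≤ 1 := Real.cos_le_one _
    have hcosne : Real.cos (x i / 2) ≠ 0 := by
      have : 0 < Real.cos (x i / 2) :=
        Real.cos_pos_of_mem_Ioo ⟨by linarith [(hxi i).1, Real.pi_pos], by linarith [(hxi i).2]⟩
      linarith
    have hsinx : Real.sin (x i) = 2 * Real.sin (x i / 2) * Real.cos (x i / 2) := by
      rw [show x i = 2 * (x i / 2) by ring, Real.sin_two_mul]
      ring_nf
    have hsq : Real.sin (x i / 2) ^ 2 = (1 - Real.cos (x i)) / 2 := by
      have := Real.sin_sq_eq_half_sub (x i / 2)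
      rw [this, show 2 * (x i / 2) = x i by ring]
      ring
    rw [hr]
    rw [Real.sq_sqrt (by linarith : (0:ℝ) ≤ (1 - Real.cos (x i)) / 2)]
    rw [Real.tan_eq_sin_div_cos, hsinx, ← hsq]
    field_simp
  have hCS := Finset.sum_sq_le_sum_mul_sum_of_sq_eq_mul Finset.univ hf hg ht
  set t : ℝ := Real.sqrt ((1 - Real.cos c) / 2) with htdef
  have htnn : 0 ≤ t := Real.sqrt_nonneg _
  have hrt : ∀ i ∈ Finset.univ, t ≤ r i := by
    intro i _
    apply Real.sqrt_le_sqrt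
    have : Real.cos (x i) < Real.cos c :=
      Real.cos_lt_cos_of_nonneg_of_le_pi hc0.le (hxi i).2.le (hx i).1
    linarith
  have hsum : (m:ℝ) * t ≤ ∑ i, r i := by
    have := Finset.card_nsmul_le_sum Finset.univ r t hrt
    simpa [nsmul_eq_mul] using this
  have hmt : ((m:ℝ) * t) ^ 2 ≤ (∑ i, r i) ^ 2 := by
    apply pow_le_pow_left₀ (by positivity) hsum
  have ht2 : t ^ 2 = (1 - Real.cos c) / 2 := by
    have : Real.cos c ≤ 1 := Real.cos_le_one _
    exact Real.sq_sqrt (by linarith)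
  calc (m : ℝ) ^ 2 * (1 - Real.cos c) / 2 = ((m:ℝ) * t) ^ 2 := by rw [mul_pow, ht2]; ring
    _ ≤ (∑ i, r i) ^ 2 := hmt
    _ ≤ (∑ i, Real.sin (x i) / 2) * (∑ i, Real.tan (x i / 2)) := hCS
end

section
/- The function c ↦ 4c/(π² sin c) + 2/(1 − cos c) on (0, π) is strictly convex, tends to +∞ as c → 0⁺ and as c → π⁻, and hence attains a unique minimum on (0, π). -/
open Real Set Filter

noncomputable def F1 : ℝ → ℝ := fun c => 4 * c / (π ^ 2 * Real.sin c)
noncomputable def F2 : ℝ → ℝ := fun c => 2 / (1 - Real.cos c)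

lemma sin_pos' {x : ℝ} (hx : x ∈ Ioo 0 π) : 0 < Real.sin x :=
  Real.sin_pos_of_pos_of_lt_pi hx.1 hx.2

lemma one_sub_cos_pos {x : ℝ} (hx : x ∈ Ioo 0 π) : 0 < 1 - Real.cos x := by
  have : Real.cos x < Real.cos 0 :=
    Real.cos_lt_cos_of_nonneg_of_le_pi le_rfl hx.2.le hx.1
  simp [Real.cos_zero] at this
  linarith

lemma hasDerivAt_F1 {x : ℝ} (hx : x ∈ Ioo 0 π) :
    HasDerivAt F1 (4 * (Real.sin x - x * Real.cos x) / (π ^ 2 * Real.sin x ^ 2)) x := by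
  have hs := (sin_pos' hx).ne'
  have hd : HasDerivAt (fun c : ℝ => π ^ 2 * Real.sin c) (π ^ 2 * Real.cos x) x :=
    (Real.hasDerivAt_sin x).const_mul _
  have hn : HasDerivAt (fun c : ℝ => 4 * c) 4 x := by
    simpa using (hasDerivAt_id x).const_mul (4:ℝ)
  have := hn.div hd (by positivity)
  refine this.congr_deriv (Eq.symm ?_)
  field_simp

lemma hasDerivAt_F1' {x : ℝ} (hx : x ∈ Ioo 0 π) :
    HasDerivAt (fun c => 4 * (Real.sin c - c * Real.cos c) / (π ^ 2 * Real.sin c ^ 2))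
      (4 * (x * (1 + Real.cos x ^ 2) - 2 * Real.sin x * Real.cos x) / (π ^ 2 * Real.sin x ^ 3)) x := by
  have hs := (sin_pos' hx).ne'
  have hn : HasDerivAt (fun c : ℝ => 4 * (Real.sin c - c * Real.cos c)) (4 * (x * Real.sin x)) x := by
    have h1 : HasDerivAt (fun c : ℝ => c * Real.cos c) (1 * Real.cos x + x * (-Real.sin x)) x :=
      (hasDerivAt_id x).mul (Real.hasDerivAt_cos x)
    have := ((Real.hasDerivAt_sin x).sub h1).const_mul (4:ℝ)
    refine this.congr_deriv (Eq.symm ?_); ring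
  have hd : HasDerivAt (fun c : ℝ => π ^ 2 * Real.sin c ^ 2)
      (π ^ 2 * (2 * Real.sin x * Real.cos x)) x := by
    have := ((Real.hasDerivAt_sin x).pow 2).const_mul (π ^ 2)
    refine this.congr_deriv (Eq.symm ?_); ring
  have := hn.div hd (by positivity)
  refine this.congr_deriv (Eq.symm ?_)
  have hpy := Real.sin_sq_add_cos_sq x
  field_simp
  linear_combination (-x) * hpy

lemma hasDerivAt_F2 {x : ℝ} (hx : x ∈ Ioo 0 π) :
    HasDerivAt F2 (-2 * Real.sin x / (1 - Real.cos x) ^ 2) x := by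
  have hc := (one_sub_cos_pos hx).ne'
  have hd : HasDerivAt (fun c : ℝ => 1 - Real.cos c) (Real.sin x) x := by
    have := (hasDerivAt_const x (1:ℝ)).sub (Real.hasDerivAt_cos x)
    exact this.congr_deriv (by simp)
  have := (hasDerivAt_const x (2:ℝ)).div hd hc
  refine this.congr_deriv (Eq.symm ?_)
  field_simp
  ring

lemma hasDerivAt_F2' {x : ℝ} (hx : x ∈ Ioo 0 π) :
    HasDerivAt (fun c => -2 * Real.sin c / (1 - Real.cos c) ^ 2)
      (2 * (2 + Real.cos x) / (1 - Real.cos x) ^ 2) x := by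
  have hc := (one_sub_cos_pos hx).ne'
  have hn : HasDerivAt (fun c : ℝ => -2 * Real.sin c) (-2 * Real.cos x) x :=
    (Real.hasDerivAt_sin x).const_mul (-2)
  have hd : HasDerivAt (fun c : ℝ => (1 - Real.cos c) ^ 2)
      (2 * (1 - Real.cos x) * Real.sin x) x := by
    have h1 : HasDerivAt (fun c : ℝ => 1 - Real.cos c) (Real.sin x) x := by
      have := (hasDerivAt_const x (1:ℝ)).sub (Real.hasDerivAt_cos x)
      exact this.congr_deriv (by simp)
    have := h1.pow 2
    refine this.congr_deriv (Eq.symm ?_); ring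
  have := hn.div hd (by positivity)
  refine this.congr_deriv (Eq.symm ?_)
  have hsin : Real.sin x ^ 2 = (1 - Real.cos x) * (1 + Real.cos x) := by
    have := Real.sin_sq_add_cos_sq x
    nlinarith
  field_simp
  nlinarith [sq_nonneg (1 - Real.cos x), one_sub_cos_pos hx]

lemma deriv2_F1 {x : ℝ} (hx : x ∈ Ioo 0 π) :
    deriv^[2] F1 x = 4 * (x * (1 + Real.cos x ^ 2) - 2 * Real.sin x * Real.cos x) / (π ^ 2 * Real.sin x ^ 3) := by
  have hev : deriv F1 =ᶠ[nhds x]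
      fun c => 4 * (Real.sin c - c * Real.cos c) / (π ^ 2 * Real.sin c ^ 2) := by
    filter_upwards [isOpen_Ioo.mem_nhds hx] with y hy
    exact (hasDerivAt_F1 hy).deriv
  simp only [Function.iterate_succ, Function.iterate_zero, Function.comp_apply, Function.id_def]
  rw [hev.deriv_eq]
  exact (hasDerivAt_F1' hx).deriv

lemma deriv2_F2 {x : ℝ} (hx : x ∈ Ioo 0 π) :
    deriv^[2] F2 x = 2 * (2 + Real.cos x) / (1 - Real.cos x) ^ 2 := by
  have hev : deriv F2 =ᶠ[nhds x] fun c => -2 * Real.sin c / (1 - Real.cos c) ^ 2 := by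
    filter_upwards [isOpen_Ioo.mem_nhds hx] with y hy
    exact (hasDerivAt_F2 hy).deriv
  simp only [Function.iterate_succ, Function.iterate_zero, Function.comp_apply, Function.id_def]
  rw [hev.deriv_eq]
  exact (hasDerivAt_F2' hx).deriv

lemma continuousOn_F1 : ContinuousOn F1 (Ioo 0 π) := by
  apply ContinuousOn.div
  · fun_prop
  · fun_prop
  · intro x hx; exact (mul_pos (by positivity) (sin_pos' hx)).ne'

lemma continuousOn_F2 : ContinuousOn F2 (Ioo 0 π) := by
  apply ContinuousOn.div
  · fun_prop
  · fun_prop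
  · intro x hx; exact (one_sub_cos_pos hx).ne'

lemma strictConvexOn_F1 : StrictConvexOn ℝ (Ioo 0 π) F1 := by
  apply strictConvexOn_of_deriv2_pos (convex_Ioo 0 π) continuousOn_F1
  intro x hx
  rw [interior_Ioo] at hx
  rw [deriv2_F1 hx]
  have hs := sin_pos' hx
  have hkey : 2 * Real.sin x * Real.cos x < x * (1 + Real.cos x ^ 2) := by
    rcases le_or_gt (Real.cos x) 0 with h | h
    · have h1 : 2 * Real.sin x * Real.cos x ≤ 0 := by
        apply mul_nonpos_of_nonneg_of_nonpos (by positivity) h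
      have h2 : 0 < x * (1 + Real.cos x ^ 2) := by
        have := hx.1; positivity
      linarith
    · have h1 : Real.sin x < x := Real.sin_lt hx.1
      nlinarith [sq_nonneg (1 - Real.cos x)]
  apply div_pos (by linarith) (by positivity)

lemma strictConvexOn_F2 : StrictConvexOn ℝ (Ioo 0 π) F2 := by
  apply strictConvexOn_of_deriv2_pos (convex_Ioo 0 π) continuousOn_F2
  intro x hx
  rw [interior_Ioo] at hx
  rw [deriv2_F2 hx]
  have h1 := one_sub_cos_pos hx
  have h2 : -1 ≤ Real.cos x := Real.neg_one_le_cos x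
  have : (0:ℝ) < 2 + Real.cos x := by linarith
  positivity

lemma strictConvexOn_G :
    StrictConvexOn ℝ (Ioo 0 π)
      (fun c : ℝ => 4 * c / (π ^ 2 * Real.sin c) + 2 / (1 - Real.cos c)) :=
  strictConvexOn_F1.add strictConvexOn_F2

lemma tendsto_G_zero :
    Tendsto (fun c : ℝ => 4 * c / (π ^ 2 * Real.sin c) + 2 / (1 - Real.cos c))
      (nhdsWithin 0 (Ioi 0)) atTop := by
  apply Filter.Tendsto.zero_eventuallyLE_add_atTop
  · filter_upwards [Ioo_mem_nhdsGT pi_pos] with c hc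
    exact le_of_lt (div_pos (by nlinarith [hc.1]) (mul_pos (by positivity) (sin_pos' hc)))
  · have h1 : Tendsto (fun c : ℝ => 1 - Real.cos c) (nhdsWithin 0 (Ioi 0)) (nhdsWithin 0 (Ioi 0)) := by
      rw [tendsto_nhdsWithin_iff]
      constructor
      · have hcont : Continuous fun c : ℝ => 1 - Real.cos c := by fun_prop
        simpa using (hcont.tendsto 0).mono_left nhdsWithin_le_nhds
      · filter_upwards [Ioo_mem_nhdsGT pi_pos] with c hc
        exact one_sub_cos_pos hc
    have h2 := tendsto_inv_nhdsGT_zero.comp h1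
    have h3 := h2.const_mul_atTop (show (0:ℝ) < 2 by norm_num)
    exact h3.congr fun c => (div_eq_mul_inv _ _).symm

lemma tendsto_G_pi :
    Tendsto (fun c : ℝ => 4 * c / (π ^ 2 * Real.sin c) + 2 / (1 - Real.cos c))
      (nhdsWithin π (Iio π)) atTop := by
  apply Tendsto.atTop_add (C := 2 / (1 - Real.cos π))
  · have h1 : Tendsto (fun c : ℝ => π ^ 2 * Real.sin c) (nhdsWithin π (Iio π)) (nhdsWithin 0 (Ioi 0)) := by
      rw [tendsto_nhdsWithin_iff]
      constructor
      · have hcont : Continuous fun c : ℝ => π ^ 2 * Real.sin c := by fun_prop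
        have h := (hcont.tendsto π).mono_left (nhdsWithin_le_nhds (s := Iio π))
        simpa [Real.sin_pi] using h
      · filter_upwards [Ioo_mem_nhdsLT pi_pos] with c hc
        exact mul_pos (by positivity) (sin_pos' hc)
    have h2 := tendsto_inv_nhdsGT_zero.comp h1
    have h3 : Tendsto (fun c : ℝ => 4 * c) (nhdsWithin π (Iio π)) (nhds (4 * π)) := by
      have : Continuous fun c : ℝ => 4 * c := by fun_prop
      exact (this.tendsto π).mono_left (nhdsWithin_le_nhds (s := Iio π))
    have := Tendsto.pos_mul_atTop (by positivity : (0:ℝ) < 4 * π) h3 h2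
    exact this.congr fun c => (div_eq_mul_inv _ _).symm
  · have hcont : ContinuousAt (fun c : ℝ => 2 / (1 - Real.cos c)) π := by
      apply ContinuousAt.div (by fun_prop) (by fun_prop)
      rw [Real.cos_pi]; norm_num
    exact hcont.tendsto.mono_left (nhdsWithin_le_nhds (s := Iio π))

theorem strictConvex_reciprocal_bound :
    StrictConvexOn ℝ (Ioo 0 π)
      (fun c : ℝ => 4 * c / (π ^ 2 * Real.sin c) + 2 / (1 - Real.cos c)) ∧
    Tendsto (fun c : ℝ => 4 * c / (π ^ 2 * Real.sin c) + 2 / (1 - Real.cos c))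
      (nhdsWithin 0 (Ioi 0)) atTop ∧
    Tendsto (fun c : ℝ => 4 * c / (π ^ 2 * Real.sin c) + 2 / (1 - Real.cos c))
      (nhdsWithin π (Iio π)) atTop ∧
    ∃! c : ℝ, c ∈ Ioo 0 π ∧
      IsMinOn (fun c : ℝ => 4 * c / (π ^ 2 * Real.sin c) + 2 / (1 - Real.cos c))
        (Ioo 0 π) c := by
  set G : ℝ → ℝ := fun c : ℝ => 4 * c / (π ^ 2 * Real.sin c) + 2 / (1 - Real.cos c) with hG
  refine ⟨strictConvexOn_G, tendsto_G_zero, tendsto_G_pi, ?_⟩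
  -- existence of a minimizer
  have hcontG : ContinuousOn G (Ioo 0 π) := continuousOn_F1.add continuousOn_F2
  set K : ℝ := G (π / 2) with hK
  have h0 : {c : ℝ | K < G c} ∈ nhdsWithin (0:ℝ) (Ioi 0) :=
    tendsto_G_zero.eventually (eventually_gt_atTop K)
  have hpi : {c : ℝ | K < G c} ∈ nhdsWithin π (Iio π) :=
    tendsto_G_pi.eventually (eventually_gt_atTop K)
  obtain ⟨u, hu, hsu⟩ := mem_nhdsGT_iff_exists_Ioo_subset.mp h0
  obtain ⟨l, hl, hsl⟩ := mem_nhdsLT_iff_exists_Ioo_subset.mp hpi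
  rw [mem_Ioi] at hu
  rw [mem_Iio] at hl
  set a : ℝ := min (u / 2) (π / 2) with ha
  set b : ℝ := max ((l + π) / 2) (π / 2) with hb
  have ha0 : 0 < a := lt_min (by linarith) (by positivity)
  have haπ2 : a ≤ π / 2 := min_le_right _ _
  have hbπ2 : π / 2 ≤ b := le_max_right _ _
  have hbπ : b < π := max_lt (by linarith) (by linarith [pi_pos])
  have hsub : Icc a b ⊆ Ioo 0 π := fun x hx => ⟨lt_of_lt_of_le ha0 hx.1, lt_of_le_of_lt hx.2 hbπ⟩
  obtain ⟨c₀, hc₀mem, hc₀min⟩ :=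
    (isCompact_Icc (a := a) (b := b)).exists_isMinOn (Set.nonempty_Icc.mpr (haπ2.trans hbπ2))
      (hcontG.mono hsub)
  have hc₀Ioo : c₀ ∈ Ioo 0 π := hsub hc₀mem
  have hc₀K : G c₀ ≤ K := isMinOn_iff.mp hc₀min (π / 2) ⟨haπ2, hbπ2⟩
  have hmin : IsMinOn G (Ioo 0 π) c₀ := by
    apply isMinOn_iff.mpr
    intro y hy
    by_cases hyab : y ∈ Icc a b
    · exact isMinOn_iff.mp hc₀min y hyab
    · have : y < a ∨ b < y := by
        rcases lt_or_ge y a with h | h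
        · exact Or.inl h
        · rcases le_or_gt y b with h' | h'
          · exact absurd ⟨h, h'⟩ hyab
          · exact Or.inr h'
      rcases this with h | h
      · have : y ∈ Ioo 0 u := ⟨hy.1, by
          calc y < a := h
          _ ≤ u / 2 := min_le_left _ _
          _ < u := by linarith⟩
        exact hc₀K.trans (le_of_lt (hsu this))
      · have : y ∈ Ioo l π := ⟨by
          calc l < (l + π) / 2 := by linarith
          _ ≤ b := le_max_left _ _
          _ < y := h, hy.2⟩
        exact hc₀K.trans (le_of_lt (hsl this))
  exact ⟨c₀, ⟨hc₀Ioo, hmin⟩, fun y ⟨hy1, hy2⟩ =>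
    strictConvexOn_G.eq_of_isMinOn hy2 hmin hy1 hc₀Ioo⟩
end

section
/- Let k ≥ 2 and n ≥ 2k+1 be integers, and let ϑ_1, ..., ϑ_n ∈ (0, π) with ∑ ϑ_i = 2kπ. Then for any c ∈ (0, π), [∑_{i=1}^n (sin ϑ_i)/2] · [∑_{i=1}^n tan(ϑ_i/2)] ≥ 4k² · [(π²/4)(sin c/c)·((1−cos c)/2)] / [(π²/4)(sin c/c) + (1−cos c)/2]. In particular, choosing the optimal c, the left side is ≥ 4k² / min_{t∈(0,π)} (4t/(π² sin t) + 2/(1 − cos t)) > 1.73 k². -/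
open Real Set Finset

theorem inscribed_volume_product_bound (k n : ℕ) (hk : 2 ≤ k)
    (hn : 2 * k + 1 ≤ n) (ϑ : Fin n → ℝ) (hϑ : ∀ i, ϑ i ∈ Ioo 0 π)
    (hsum : ∑ i, ϑ i = 2 * k * π) :
    (∀ c ∈ Ioo (0 : ℝ) π,
      (∑ i, Real.sin (ϑ i) / 2) * (∑ i, Real.tan (ϑ i / 2)) ≥
        4 * (k : ℝ) ^ 2 *
          ((π ^ 2 / 4) * (Real.sin c / c) * ((1 - Real.cos c) / 2)) /
          ((π ^ 2 / 4) * (Real.sin c / c) + (1 - Real.cos c) / 2)) ∧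
    (∑ i, Real.sin (ϑ i) / 2) * (∑ i, Real.tan (ϑ i / 2)) ≥
      4 * (k : ℝ) ^ 2 /
        sInf ((fun t : ℝ => 4 * t / (π ^ 2 * Real.sin t) + 2 / (1 - Real.cos t)) ''
          Ioo 0 π) ∧
    (∑ i, Real.sin (ϑ i) / 2) * (∑ i, Real.tan (ϑ i / 2)) >
      1.73 * (k : ℝ) ^ 2 := by
  have hπ : (0:ℝ) < π := Real.pi_pos
  -- Key inequality: the product is at least 4 k².
  have key : (∑ i, Real.sin (ϑ i) / 2) * (∑ i, Real.tan (ϑ i / 2)) ≥ 4 * (k : ℝ) ^ 2 := by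
    have cauchy : (∑ i, Real.sin (ϑ i / 2)) ^ 2 ≤
        (∑ i, Real.sin (ϑ i) / 2) * (∑ i, Real.tan (ϑ i / 2)) := by
      apply Finset.sum_sq_le_sum_mul_sum_of_sq_eq_mul
      · intro i _
        have h := hϑ i
        have := Real.sin_nonneg_of_nonneg_of_le_pi (le_of_lt h.1) (le_of_lt h.2)
        linarith
      · intro i _
        have h := hϑ i
        exact le_of_lt (Real.tan_pos_of_pos_of_lt_pi_div_two (by linarith [h.1])
          (by linarith [h.2]))
      · intro i _
        have h := hϑ i
        have hc : Real.cos (ϑ i / 2) > 0 :=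
          Real.cos_pos_of_mem_Ioo ⟨by linarith [h.1], by linarith [h.2]⟩
        rw [Real.tan_eq_sin_div_cos, Real.sin_sq_eq_half_sub]
        rw [show ϑ i = 2 * (ϑ i / 2) by ring, Real.cos_two_mul, Real.sin_two_mul]
        have := Real.sin_sq_add_cos_sq (ϑ i / 2)
        field_simp
        nlinarith [Real.sin_sq_add_cos_sq (ϑ i / 2)]
    have hlow : (2 : ℝ) * k ≤ ∑ i, Real.sin (ϑ i / 2) := by
      have : ∑ i, (2 / π) * (ϑ i / 2) ≤ ∑ i, Real.sin (ϑ i / 2) := by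
        apply Finset.sum_le_sum
        intro i _
        have h := hϑ i
        exact Real.mul_le_sin (by linarith [h.1]) (by linarith [h.2])
      calc (2:ℝ) * k = (2 / π) * ((2 * k * π) / 2) := by field_simp
        _ = ∑ i, (2 / π) * (ϑ i / 2) := by
            rw [← hsum, Finset.sum_div, ← Finset.mul_sum]
        _ ≤ _ := this
    have h2k : (0:ℝ) ≤ 2 * k := by positivity
    nlinarith [cauchy, hlow]
  have hk2 : (0:ℝ) < (k:ℝ)^2 := by
    have : (0:ℝ) < (k:ℝ) := by exact_mod_cast Nat.lt_of_lt_of_le (by norm_num) hk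
    positivity
  refine ⟨?_, ?_, ?_⟩
  · -- first bound: RHS ≤ 4k²
    intro c hc
    obtain ⟨hc0, hcπ⟩ := hc
    set f : ℝ := (π ^ 2 / 4) * (Real.sin c / c) with hf
    set g : ℝ := (1 - Real.cos c) / 2 with hg
    have hfpos : 0 < f := by
      have := Real.sin_pos_of_pos_of_lt_pi hc0 hcπ
      positivity
    have hgpos : 0 < g := by
      have := by simpa using Real.cos_lt_cos_of_nonneg_of_le_pi le_rfl (le_of_lt hcπ) hc0
      simp only [hg]; linarith
    have hg1 : g ≤ 1 := by
      have := Real.neg_one_le_cos c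
      simp only [hg]; linarith
    have hfg : f * g / (f + g) ≤ 1 := by
      rw [div_le_one (by linarith)]
      nlinarith
    have : 4 * (k : ℝ) ^ 2 * (f * g) / (f + g) ≤ 4 * (k:ℝ)^2 := by
      rw [mul_div_assoc]
      nlinarith
    calc 4 * (k : ℝ) ^ 2 * (f * g) / (f + g) ≤ 4 * (k:ℝ)^2 := this
      _ ≤ _ := key
  · -- second bound: sInf ≥ 1
    have hne : ((fun t : ℝ => 4 * t / (π ^ 2 * Real.sin t) + 2 / (1 - Real.cos t)) ''
        Ioo 0 π).Nonempty := by
      exact (Set.nonempty_Ioo.2 hπ).image _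
    have hb : ∀ x ∈ ((fun t : ℝ => 4 * t / (π ^ 2 * Real.sin t) + 2 / (1 - Real.cos t)) ''
        Ioo 0 π), (1:ℝ) ≤ x := by
      rintro x ⟨t, ⟨ht0, htπ⟩, rfl⟩
      have hsin : 0 < Real.sin t := Real.sin_pos_of_pos_of_lt_pi ht0 htπ
      have hcos : Real.cos t < 1 := by simpa using Real.cos_lt_cos_of_nonneg_of_le_pi le_rfl (le_of_lt htπ) ht0
      have hcos' : -1 ≤ Real.cos t := Real.neg_one_le_cos t
      have h1 : (1:ℝ) ≤ 2 / (1 - Real.cos t) := by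
        rw [le_div_iff₀ (by linarith)]; linarith
      have h2 : 0 ≤ 4 * t / (π ^ 2 * Real.sin t) := by positivity
      linarith
    have hInf : (1:ℝ) ≤ sInf ((fun t : ℝ => 4 * t / (π ^ 2 * Real.sin t) +
        2 / (1 - Real.cos t)) '' Ioo 0 π) := le_csInf hne hb
    calc 4 * (k : ℝ) ^ 2 / sInf _ ≤ 4 * (k:ℝ)^2 / 1 := by
          apply div_le_div_of_nonneg_left (by positivity) (by norm_num) hInf
      _ = 4 * (k:ℝ)^2 := by ring
      _ ≤ _ := key
  · calc (1.73 : ℝ) * (k:ℝ)^2 < 4 * (k:ℝ)^2 := by nlinarith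
      _ ≤ _ := key
end
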